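/- For nonnegative integers i, j and 1 ≤ a ≤ b, ∫ₐᵇ t^{-γ} Q_i(t) Q_j(t) dt ≤ ∫ₐᵇ t^{-γ} h(t) Q_{i+j}(t) dt, where Q_m(t) = ∫₁^∞ s^{-γ}(max(t,s))^{-1} h(s)^m ds and h = Q₀. -/

import Mathlib

open MeasureTheory Real

noncomputable def h0 (γ t : ℝ) : ℝ := ∫ s in (1:ℝ)..t, s ^ (-γ)

noncomputable def hfun (γ t : ℝ) : ℝ := ∫ s in Set.Ioi (1:ℝ), s ^ (-γ) * (max t s)⁻¹

noncomputable def Nfun (γ : ℝ) (m : ℕ) (t : ℝ) : ℝ := ∫ s in (1:ℝ)..t, s ^ (-γ) * (hfun γ s) ^ m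

noncomputable def Qfun (γ : ℝ) (m : ℕ) (t : ℝ) : ℝ :=
  ∫ s in Set.Ioi (1:ℝ), s ^ (-γ) * (max t s)⁻¹ * (hfun γ s) ^ m

noncomputable def Pfun (γ : ℝ) (m : ℕ) (t : ℝ) : ℝ :=
  ∫ s in Set.Ioi (1:ℝ), s ^ (-γ) * hfun γ (max t s) * (hfun γ s) ^ m

noncomputable def Rfun (γ : ℝ) (m : ℕ) (t : ℝ) : ℝ :=
  ∫ s in Set.Ioi t, s ^ (-2 : ℝ) * Pfun γ m s

/-!
For fixed `t`, the weight `s ^ (-γ) * (max t s)⁻¹` on `(1, ∞)` has total mass `h t`, and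
`Q m t` is the integral of `h ^ m` against it. The functions `h ^ i` and `h ^ j` are similarly
ordered, so Chebyshev's integral inequality gives `Q i t * Q j t ≤ h t * Q (i + j) t` pointwise;
multiplying by `t ^ (-γ) ≥ 0` and integrating over `[a, b]` proves the claim.
-/

open Set

theorem Monovary.integral_mul_integral_le {α : Type*} [MeasurableSpace α] {μ : Measure α}
    {w f g : α → ℝ} (hfg : Monovary f g) (hw : 0 ≤ᵐ[μ] w) (hw_int : Integrable w μ)
    (hwf : Integrable (fun x => w x * f x) μ) (hwg : Integrable (fun x => w x * g x) μ)
    (hwfg : Integrable (fun x => w x * (f x * g x)) μ) :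
    (∫ x, w x * f x ∂μ) * (∫ x, w x * g x ∂μ) ≤
      (∫ x, w x ∂μ) * ∫ x, w x * (f x * g x) ∂μ := by
  set A := ∫ x, w x ∂μ
  set F := ∫ x, w x * f x ∂μ
  set G := ∫ x, w x * g x ∂μ
  set H := ∫ x, w x * (f x * g x) ∂μ
  have hsim : ∀ x y, 0 ≤ (f x - f y) * (g x - g y) := fun x y =>
    monovary_iff_forall_smul_nonneg.1 hfg y x
  -- Integrate `w x * ((f x - f y) * (g x - g y)) ≥ 0` in `x`, then against `w y` in `y`;
  -- both steps only use linearity, so no Fubini argument is needed.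
  have inner : ∀ y, 0 ≤ H - g y * F - f y * G + f y * g y * A := by
    intro y
    have hexp : ∀ x, w x * ((f x - f y) * (g x - g y)) =
        w x * (f x * g x) - g y * (w x * f x) - f y * (w x * g x) + f y * g y * w x := by
      intro x; ring
    have := integral_nonneg_of_ae (μ := μ) (f := fun x => w x * ((f x - f y) * (g x - g y)))
      (hw.mono fun x hx => mul_nonneg hx (hsim x y))
    simp only [hexp] at this
    rwa [integral_add, integral_sub, integral_sub, integral_const_mul, integral_const_mul,
      integral_const_mul] at this
    all_goals fun_prop
  have outer := integral_nonneg_of_ae (μ := μ)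
    (f := fun y => w y * (H - g y * F - f y * G + f y * g y * A))
    (hw.mono fun y hy => mul_nonneg hy (inner y))
  have hexp : ∀ y, w y * (H - g y * F - f y * G + f y * g y * A) =
      H * w y - F * (w y * g y) - G * (w y * f y) + A * (w y * (f y * g y)) := by
    intro y; ring
  simp only [hexp] at outer
  rw [integral_add, integral_sub, integral_sub, integral_const_mul, integral_const_mul,
    integral_const_mul, integral_const_mul] at outer
  · nlinarith
  all_goals fun_prop

section Kernel

variable {γ : ℝ}

lemma integrableOn_rpow_neg_mul_inv_max (hγ : 0 < γ) (t : ℝ) :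
    IntegrableOn (fun s : ℝ => s ^ (-γ) * (max t s)⁻¹) (Ioi 1) := by
  refine Integrable.mono' (integrableOn_Ioi_rpow_of_lt (by linarith : -γ - 1 < -1) one_pos)
    (by fun_prop) ?_
  filter_upwards [self_mem_ae_restrict measurableSet_Ioi] with s (hs : 1 < s)
  have hs₀ : 0 < s := one_pos.trans hs
  rw [norm_of_nonneg (by positivity), rpow_sub hs₀, rpow_one, div_eq_mul_inv]
  gcongr
  exact le_max_right t s

lemma rpow_neg_mul_inv_max_nonneg (γ t : ℝ) {s : ℝ} (hs : 0 < s) :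
    0 ≤ s ^ (-γ) * (max t s)⁻¹ := by
  have : 0 < max t s := hs.trans_le (le_max_right t s)
  positivity

lemma hfun_nonneg (γ t : ℝ) : 0 ≤ hfun γ t :=
  setIntegral_nonneg measurableSet_Ioi fun _s hs =>
    rpow_neg_mul_inv_max_nonneg γ t (one_pos.trans hs)

lemma hfun_antitone (hγ : 0 < γ) : Antitone (hfun γ) := by
  intro t₁ t₂ ht
  refine setIntegral_mono_on (integrableOn_rpow_neg_mul_inv_max hγ t₂)
    (integrableOn_rpow_neg_mul_inv_max hγ t₁) measurableSet_Ioi fun s (hs : 1 < s) => ?_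
  have hs₀ : 0 < s := one_pos.trans hs
  have : 0 < max t₁ s := hs₀.trans_le (le_max_right t₁ s)
  gcongr

lemma integrableOn_rpow_neg_mul_inv_max_mul_hfun_pow (hγ : 0 < γ) (m : ℕ) (t : ℝ) :
    IntegrableOn (fun s : ℝ => s ^ (-γ) * (max t s)⁻¹ * hfun γ s ^ m) (Ioi 1) := by
  refine (integrableOn_rpow_neg_mul_inv_max hγ t).mul_bdd (c := hfun γ 1 ^ m)
    ((hfun_antitone hγ).measurable.pow_const m).aestronglyMeasurable ?_
  filter_upwards [self_mem_ae_restrict measurableSet_Ioi] with s (hs : 1 < s)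
  rw [norm_of_nonneg (pow_nonneg (hfun_nonneg γ s) m)]
  exact pow_le_pow_left₀ (hfun_nonneg γ s) (hfun_antitone hγ hs.le) m

lemma Qfun_nonneg (γ : ℝ) (m : ℕ) (t : ℝ) : 0 ≤ Qfun γ m t :=
  setIntegral_nonneg measurableSet_Ioi fun s hs =>
    mul_nonneg (rpow_neg_mul_inv_max_nonneg γ t (one_pos.trans hs))
      (pow_nonneg (hfun_nonneg γ s) m)

lemma Qfun_antitone (hγ : 0 < γ) (m : ℕ) : Antitone (Qfun γ m) := by
  intro t₁ t₂ ht
  refine setIntegral_mono_on (integrableOn_rpow_neg_mul_inv_max_mul_hfun_pow hγ m t₂)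
    (integrableOn_rpow_neg_mul_inv_max_mul_hfun_pow hγ m t₁) measurableSet_Ioi
    fun s (hs : 1 < s) => ?_
  have hs₀ : 0 < s := one_pos.trans hs
  have : 0 < max t₁ s := hs₀.trans_le (le_max_right t₁ s)
  have := hfun_nonneg γ s
  gcongr

theorem Qfun_mul_Qfun_le (hγ : 0 < γ) (i j : ℕ) (t : ℝ) :
    Qfun γ i t * Qfun γ j t ≤ hfun γ t * Qfun γ (i + j) t := by
  have hmono : Monovary (hfun γ ^ i) (hfun γ ^ j) :=
    ((monovary_self (hfun γ)).pow_left₀ (hfun_nonneg γ) i).pow_right₀ (hfun_nonneg γ) j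
  have := hmono.integral_mul_integral_le
    (ae_restrict_of_forall_mem measurableSet_Ioi fun _s hs =>
      rpow_neg_mul_inv_max_nonneg γ t (one_pos.trans hs))
    (integrableOn_rpow_neg_mul_inv_max hγ t)
    (integrableOn_rpow_neg_mul_inv_max_mul_hfun_pow hγ i t)
    (integrableOn_rpow_neg_mul_inv_max_mul_hfun_pow hγ j t)
    (by simpa only [IntegrableOn, pow_add, mul_assoc, Pi.pow_apply] using
      integrableOn_rpow_neg_mul_inv_max_mul_hfun_pow hγ (i + j) t)
  simpa only [Qfun, hfun, pow_add, mul_assoc, Pi.pow_apply] using this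

end Kernel

lemma antitoneOn_rpow_neg_mul_mul {γ : ℝ} (hγ : 0 ≤ γ) {F G : ℝ → ℝ} (hF : Antitone F)
    (hG : Antitone G) (hF₀ : 0 ≤ F) (hG₀ : 0 ≤ G) :
    AntitoneOn (fun t => t ^ (-γ) * F t * G t) (Ioi 0) := by
  intro x (hx : 0 < x) y hy hxy
  have hrpow := antitoneOn_rpow_Ioi_of_exponent_nonpos (neg_nonpos.2 hγ) hx hy hxy
  exact mul_le_mul (mul_le_mul hrpow (hF hxy) (hF₀ y) (by positivity)) (hG hxy) (hG₀ y)
    (mul_nonneg (by positivity) (hF₀ x))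

theorem stmt_12_general (γ a b : ℝ) (hγ : 0 < γ) (ha : 1 ≤ a) (hab : a ≤ b)
    (i j : ℕ) :
    (∫ t in a..b, t ^ (-γ) * Qfun γ i t * Qfun γ j t)
      ≤ ∫ t in a..b, t ^ (-γ) * hfun γ t * Qfun γ (i + j) t := by
  have hsub : uIcc a b ⊆ Ioi 0 := by
    rw [uIcc_of_le hab]; exact fun t ht => one_pos.trans_le (ha.trans ht.1)
  refine intervalIntegral.integral_mono_on hab
    ((antitoneOn_rpow_neg_mul_mul hγ.le (Qfun_antitone hγ i) (Qfun_antitone hγ j)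
      (Qfun_nonneg γ i) (Qfun_nonneg γ j)).mono hsub).intervalIntegrable
    ((antitoneOn_rpow_neg_mul_mul hγ.le (hfun_antitone hγ) (Qfun_antitone hγ (i + j))
      (hfun_nonneg γ) (Qfun_nonneg γ (i + j))).mono hsub).intervalIntegrable fun t ht => ?_
  have ht₀ : 0 ≤ t := zero_le_one.trans (ha.trans ht.1)
  simpa only [mul_assoc] using
    mul_le_mul_of_nonneg_left (Qfun_mul_Qfun_le hγ i j t) (rpow_nonneg ht₀ (-γ))

theorem stmt_12 (γ a b : ℝ) (hγ : 0 < γ) (hγ1 : γ ≤ 1) (ha : 1 ≤ a) (hab : a ≤ b)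
    (i j : ℕ) :
    (∫ t in a..b, t ^ (-γ) * Qfun γ i t * Qfun γ j t)
      ≤ ∫ t in a..b, t ^ (-γ) * hfun γ t * Qfun γ (i + j) t :=
  stmt_12_general γ a b hγ ha hab i j
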